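/- arXiv:1709.02465 — 7 statements merged into one kernel-verified Lean document; each statement's English description precedes it below -/
import Mathlib

section
/- For n > 2, the order of any Hadamard matrix of order n is divisible by 4. -/
/-- An Hadamard matrix of order `n`: entries `±1` and `H * Hᵀ = n • I`.
For `n > 2`, the order `n` is divisible by 4. -/
theorem stmt_0 (n : ℕ) (hn : 2 < n) (H : Matrix (Fin n) (Fin n) ℤ)
    (hent : ∀ i j, H i j = 1 ∨ H i j = -1)
    (hH : H * H.transpose = (n : ℤ) • (1 : Matrix (Fin n) (Fin n) ℤ)) :
    4 ∣ n := by
  set i0 : Fin n := ⟨0, by omega⟩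
  set i1 : Fin n := ⟨1, by omega⟩
  set i2 : Fin n := ⟨2, by omega⟩
  have key : ∀ i j : Fin n, ∑ k, H i k * H j k =
      if i = j then (n : ℤ) else 0 := by
    intro i j
    have := congrFun (congrFun hH i) j
    simpa [Matrix.mul_apply, Matrix.transpose_apply, Matrix.one_apply] using this
  have h00 : ∑ k, H i0 k * H i0 k = (n : ℤ) := by simpa using key i0 i0
  have h01 : ∑ k, H i0 k * H i1 k = 0 := by
    have : i0 ≠ i1 := by simp [i0, i1, Fin.ext_iff]
    simpa [this] using key i0 i1
  have h02 : ∑ k, H i0 k * H i2 k = 0 := by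
    have : i0 ≠ i2 := by simp [i0, i2, Fin.ext_iff]
    simpa [this] using key i0 i2
  have h12 : ∑ k, H i1 k * H i2 k = 0 := by
    have : i1 ≠ i2 := by simp [i1, i2, Fin.ext_iff]
    simpa [this] using key i1 i2
  have hsum : ∑ k, (H i0 k + H i1 k) * (H i0 k + H i2 k) = (n : ℤ) := by
    have expand : ∀ k : Fin n, (H i0 k + H i1 k) * (H i0 k + H i2 k) =
        H i0 k * H i0 k + H i0 k * H i2 k + (H i1 k * H i0 k + H i1 k * H i2 k) := by
      intro k; ring
    rw [Finset.sum_congr rfl fun k _ => expand k]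
    rw [Finset.sum_add_distrib, Finset.sum_add_distrib, Finset.sum_add_distrib]
    have h10 : ∑ k, H i1 k * H i0 k = 0 := by
      rw [← h01]; exact Finset.sum_congr rfl fun k _ => mul_comm _ _
    rw [h00, h02, h10, h12]; ring
  have hdvd : (4 : ℤ) ∣ ∑ k, (H i0 k + H i1 k) * (H i0 k + H i2 k) := by
    apply Finset.dvd_sum
    intro k _
    rcases hent i0 k with h0 | h0 <;> rcases hent i1 k with h1 | h1 <;>
      rcases hent i2 k with h2 | h2 <;> rw [h0, h1, h2] <;> decide
  rw [hsum] at hdvd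
  exact_mod_cast hdvd
end

section
/- Let (C, ·) be an HFP-code of length 4n and D₁ the set of codewords with a zero in the first coordinate. Then (C, D₁, u) is a left Hadamard group: for any a ∉ {0, u}, |D₁ ∩ a·D₁| = 2n, and for any a, b ∈ C, |a·D₁ ∩ {b, b·u}| = 1. -/
/-- The action of a coordinate permutation `σ` on a binary vector:
`(permAct σ v) i = v (σ⁻¹ i)`. -/
def permAct {m : ℕ} (σ : Equiv.Perm (Fin m)) (v : Fin m → ZMod 2) : Fin m → ZMod 2 :=
  fun i => v (σ.symm i)

/-- The propelinear operation `x · y = x + π_x(y)`. -/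
def pmul {m : ℕ} (π : (Fin m → ZMod 2) → Equiv.Perm (Fin m))
    (x y : Fin m → ZMod 2) : Fin m → ZMod 2 :=
  x + permAct (π x) y

/-- Powers with respect to the propelinear operation. -/
def ppow {m : ℕ} (π : (Fin m → ZMod 2) → Equiv.Perm (Fin m))
    (g : Fin m → ZMod 2) : ℕ → Fin m → ZMod 2
  | 0 => 0
  | k + 1 => pmul π g (ppow π g k)

/-- The all-ones vector. -/
def allOnes (m : ℕ) : Fin m → ZMod 2 := fun _ => 1

/-!
Translation by `u` swaps the codewords with first coordinate `0` and `1`, so `|D₁| = 4n`, and two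
distinct words of `D₁` are never complementary, so they are at distance `2n`. Hence the `±1`
rows of `D₁` form a Hadamard matrix `H`; then also `Hᵀ H = 4n • 1`, and since the first column
of `H` is constant, every other coordinate takes each value exactly `2n` times on `D₁`.

For `a ∉ {0, u}`, `a · x` has first coordinate `a₁ + x_j` with `j = π_a⁻¹(1)`, and `j ≠ 1`
because `π_a` has no fixed points; so `D₁ ∩ a · D₁ = a · {x ∈ D₁ | x_j = a₁}` has `2n` elements.
Finally, every `b ∈ C` is `a · x` for some `x ∈ C`, and `b · u = a · (x + u)`; exactly one of
`x`, `x + u` lies in `D₁`.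
-/

open Finset Matrix

lemma zmod_two_eq_zero_or_one (c : ZMod 2) : c = 0 ∨ c = 1 := by
  revert c; decide

def zmodTwoSign (c : ZMod 2) : ℚ := if c = 0 then 1 else -1

lemma zmodTwoSign_add (a b : ZMod 2) :
    zmodTwoSign (a + b) = zmodTwoSign a * zmodTwoSign b := by
  obtain rfl | rfl := zmod_two_eq_zero_or_one a <;>
    obtain rfl | rfl := zmod_two_eq_zero_or_one b <;> simp [zmodTwoSign, CharTwo.add_self_eq_zero]

lemma zmodTwoSign_mul_zmodTwoSign (a b : ZMod 2) :
    zmodTwoSign a * zmodTwoSign b = 1 - 2 * if a ≠ b then 1 else 0 := by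
  obtain rfl | rfl := zmod_two_eq_zero_or_one a <;>
    obtain rfl | rfl := zmod_two_eq_zero_or_one b <;> norm_num [zmodTwoSign]

lemma sum_zmodTwoSign {α : Type*} (s : Finset α) (f : α → ZMod 2) :
    ∑ x ∈ s, zmodTwoSign (f x) = 2 * #{x ∈ s | f x = 0} - #s := by
  have h : ∀ c, zmodTwoSign c = 2 * (if c = 0 then 1 else 0) - 1 := by
    intro c; by_cases hc : c = 0 <;> norm_num [zmodTwoSign, hc]
  simp only [h, sum_sub_distrib, ← mul_sum, sum_boole, sum_const, nsmul_eq_mul, mul_one]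

theorem Matrix.mul_eq_smul_one_comm_of_card_eq {m n R : Type*} [Fintype m] [Fintype n]
    [DecidableEq m] [DecidableEq n] [Field R] {A : Matrix m n R} {B : Matrix n m R}
    (hcard : Fintype.card m = Fintype.card n) {c : R} (hc : c ≠ 0) (h : A * B = c • 1) :
    B * A = c • 1 := by
  have hinv : (c⁻¹ • A) * B = 1 := by
    rw [Matrix.smul_mul, h, smul_smul, inv_mul_cancel₀ hc, one_smul]
  rw [Matrix.mul_eq_one_comm_of_card_eq _ _ _ hcard, Matrix.mul_smul, inv_smul_eq_iff₀ hc] at hinv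
  exact hinv

section SignMatrix

variable {ι : Type*} [Fintype ι]

lemma sum_zmodTwoSign_mul_zmodTwoSign (x y : ι → ZMod 2) :
    ∑ i, zmodTwoSign (x i) * zmodTwoSign (y i) = Fintype.card ι - 2 * hammingDist x y := by
  simp only [zmodTwoSign_mul_zmodTwoSign, sum_sub_distrib, ← mul_sum, sum_boole, sum_const,
    nsmul_eq_mul, mul_one, card_univ]
  rfl

def signMatrix (D : Finset (ι → ZMod 2)) : Matrix D ι ℚ :=
  Matrix.of fun x i => zmodTwoSign (x.1 i)

lemma signMatrix_mul_transpose [DecidableEq ι] {D : Finset (ι → ZMod 2)}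
    (hdist : ∀ x ∈ D, ∀ y ∈ D, x ≠ y → 2 * hammingDist x y = Fintype.card ι) :
    signMatrix D * (signMatrix D)ᵀ = (Fintype.card ι : ℚ) • 1 := by
  ext x y
  simp only [Matrix.mul_apply, Matrix.transpose_apply, signMatrix, Matrix.of_apply,
    sum_zmodTwoSign_mul_zmodTwoSign, Matrix.smul_apply, smul_eq_mul]
  by_cases hxy : x = y
  · subst hxy
    simp [hammingDist_self]
  · have h := hdist x x.2 y y.2 (Subtype.coe_ne_coe.mpr hxy)
    rw [Matrix.one_apply_ne hxy, ← h]
    push_cast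
    ring

variable [DecidableEq ι] {D : Finset (ι → ZMod 2)} {i₀ j : ι}

lemma sum_zmodTwoSign_apply_eq_zero (hcard : #D = Fintype.card ι) (hi₀ : ∀ x ∈ D, x i₀ = 0)
    (hdist : ∀ x ∈ D, ∀ y ∈ D, x ≠ y → 2 * hammingDist x y = Fintype.card ι) (hj : j ≠ i₀) :
    ∑ x ∈ D, zmodTwoSign (x j) = 0 := by
  have : Nonempty ι := ⟨i₀⟩
  have hcol := congrFun₂ (Matrix.mul_eq_smul_one_comm_of_card_eq (by simpa using hcard)
    (Nat.cast_ne_zero.mpr Fintype.card_ne_zero) (signMatrix_mul_transpose hdist)) i₀ j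
  simp only [Matrix.mul_apply, Matrix.transpose_apply, signMatrix, Matrix.of_apply,
    Matrix.smul_apply, Matrix.one_apply_ne hj.symm, smul_zero] at hcol
  rw [← sum_coe_sort D]
  simpa [hi₀ _ (Subtype.prop _), zmodTwoSign] using hcol

theorem two_mul_card_filter_apply_eq (hcard : #D = Fintype.card ι) (hi₀ : ∀ x ∈ D, x i₀ = 0)
    (hdist : ∀ x ∈ D, ∀ y ∈ D, x ≠ y → 2 * hammingDist x y = Fintype.card ι) (hj : j ≠ i₀)
    (c : ZMod 2) : 2 * #{x ∈ D | x j = c} = Fintype.card ι := by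
  -- translating column `j` by `c` only multiplies its sign sum by `±1`
  have hsum : ∑ x ∈ D, zmodTwoSign (x j + c) = 0 := by
    simp only [zmodTwoSign_add, ← sum_mul, sum_zmodTwoSign_apply_eq_zero hcard hi₀ hdist hj,
      zero_mul]
  rw [sum_zmodTwoSign, sub_eq_zero, hcard] at hsum
  simp only [CharTwo.add_eq_zero] at hsum
  exact_mod_cast hsum

end SignMatrix

section Propelinear

variable {m : ℕ} (π : (Fin m → ZMod 2) → Equiv.Perm (Fin m))

lemma pmul_apply (a x : Fin m → ZMod 2) (i : Fin m) : pmul π a x i = a i + x ((π a).symm i) :=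
  rfl

lemma pmul_injective (a : Fin m → ZMod 2) : Function.Injective (pmul π a) := by
  intro x y h
  funext i
  simpa [pmul_apply] using congrFun h (π a i)

lemma pmul_add_allOnes (a x : Fin m → ZMod 2) :
    pmul π a (x + allOnes m) = pmul π a x + allOnes m := by
  funext i
  simp only [pmul_apply, Pi.add_apply, allOnes]
  ring

lemma pmul_allOnes (b : Fin m → ZMod 2) : pmul π b (allOnes m) = b + allOnes m :=
  rfl

lemma allOnes_pmul (hπu : π (allOnes m) = 1) (x : Fin m → ZMod 2) :
    pmul π (allOnes m) x = x + allOnes m := by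
  funext i
  rw [pmul_apply, hπu]
  exact add_comm _ _

variable {C : Finset (Fin m → ZMod 2)} {a b : Fin m → ZMod 2}

lemma image_pmul_eq_self (hclosed : ∀ x ∈ C, ∀ y ∈ C, pmul π x y ∈ C) (ha : a ∈ C) :
    C.image (pmul π a) = C :=
  eq_of_subset_of_card_le (image_subset_iff.mpr (hclosed a ha))
    (card_image_of_injective _ (pmul_injective π a)).ge

lemma add_allOnes_add_allOnes (x : Fin m → ZMod 2) : x + allOnes m + allOnes m = x := by
  funext i
  simp [allOnes, add_assoc, CharTwo.add_self_eq_zero]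

lemma two_mul_card_filter_apply_eq_zero (hC : ∀ x ∈ C, x + allOnes m ∈ C) (i₀ : Fin m) :
    2 * #{x ∈ C | x i₀ = 0} = #C := by
  have hflip : #{x ∈ C | x i₀ = 0} = #{x ∈ C | ¬ x i₀ = 0} := by
    refine card_nbij' (· + allOnes m) (· + allOnes m) ?_ ?_ ?_ ?_ <;> intro x hx <;>
      simp only [coe_filter, Set.mem_ofPred_eq] at hx ⊢
    · simp [hC x hx.1, hx.2, allOnes]
    · rcases zmod_two_eq_zero_or_one (x i₀) with h | h
      · exact absurd h hx.2
      · simp [hC x hx.1, h, allOnes, CharTwo.add_self_eq_zero]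
    · exact add_allOnes_add_allOnes x
    · exact add_allOnes_add_allOnes x
  rw [two_mul]
  nth_rw 2 [hflip]
  exact card_filter_add_card_filter_not _

lemma filter_inter_image_pmul (hclosed : ∀ x ∈ C, ∀ y ∈ C, pmul π x y ∈ C) (ha : a ∈ C)
    (i₀ : Fin m) :
    {x ∈ C | x i₀ = 0} ∩ {x ∈ C | x i₀ = 0}.image (pmul π a) =
      {x ∈ {x ∈ C | x i₀ = 0} | x ((π a).symm i₀) = a i₀}.image (pmul π a) := by
  ext y
  simp only [mem_inter, mem_image, mem_filter]
  constructor
  · rintro ⟨⟨-, hy⟩, x, hx, rfl⟩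
    rw [pmul_apply, CharTwo.add_eq_zero] at hy
    exact ⟨x, ⟨hx, hy.symm⟩, rfl⟩
  · rintro ⟨x, ⟨hx, hxj⟩, rfl⟩
    exact ⟨⟨hclosed a ha x hx.1, by rw [pmul_apply, hxj, CharTwo.add_self_eq_zero]⟩, x, hx, rfl⟩

lemma card_filter_pair_add_allOnes (x : Fin m → ZMod 2) (i₀ : Fin m) :
    #{y ∈ ({x, x + allOnes m} : Finset _) | y i₀ = 0} = 1 := by
  rcases zmod_two_eq_zero_or_one (x i₀) with h | h <;>
    simp [filter_insert, filter_singleton, h, allOnes, CharTwo.add_self_eq_zero]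

lemma card_image_pmul_inter_pair (hclosed : ∀ x ∈ C, ∀ y ∈ C, pmul π x y ∈ C)
    (hC : ∀ x ∈ C, x + allOnes m ∈ C) (ha : a ∈ C) (hb : b ∈ C) (i₀ : Fin m) :
    #({x ∈ C | x i₀ = 0}.image (pmul π a) ∩ {b, pmul π b (allOnes m)}) = 1 := by
  rw [← image_pmul_eq_self π hclosed ha] at hb
  obtain ⟨x, hx, rfl⟩ := mem_image.mp hb
  have hpair : ({pmul π a x, pmul π (pmul π a x) (allOnes m)} : Finset _) =
      ({x, x + allOnes m} : Finset _).image (pmul π a) := by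
    rw [pmul_allOnes, ← pmul_add_allOnes, image_insert, image_singleton]
  rw [hpair, ← image_inter _ _ (pmul_injective π a), card_image_of_injective _ (pmul_injective π a),
    filter_inter, inter_eq_right.mpr (insert_subset hx (singleton_subset_iff.mpr (hC x hx))),
    card_filter_pair_add_allOnes]

end Propelinear

/-- Let `(C, ·)` be an HFP-code of length `4n` and `D₁` the set of codewords with a zero
in the first coordinate. Then `(C, D₁, u)` is a left Hadamard group:
`|D₁ ∩ a·D₁| = 2n` for `a ∉ {0, u}` and `|a·D₁ ∩ {b, b·u}| = 1` for all `a, b ∈ C`. -/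
theorem stmt_6 (n : ℕ) (hn : 0 < n) (C : Finset (Fin (4*n) → ZMod 2))
    (π : (Fin (4*n) → ZMod 2) → Equiv.Perm (Fin (4*n)))
    (hu : allOnes (4*n) ∈ C)
    (hcard : C.card = 8*n)
    (hclosed : ∀ x ∈ C, ∀ y ∈ C, pmul π x y ∈ C)
    (hπu : π (allOnes (4*n)) = 1)
    (hfree : ∀ x ∈ C, x ≠ 0 → x ≠ allOnes (4*n) → ∀ i, π x i ≠ i)
    (hdist : ∀ x ∈ C, ∀ y ∈ C, x ≠ y → x ≠ y + allOnes (4*n) → hammingDist x y = 2*n)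
    (D₁ : Finset (Fin (4*n) → ZMod 2))
    (hD₁ : D₁ = C.filter (fun x => x ⟨0, by omega⟩ = 0)) :
    (∀ a ∈ C, a ≠ 0 → a ≠ allOnes (4*n) →
      (D₁ ∩ D₁.image (pmul π a)).card = 2*n) ∧
    (∀ a ∈ C, ∀ b ∈ C,
      (D₁.image (pmul π a) ∩ ({b, pmul π b (allOnes (4*n))} : Finset _)).card = 1) := by
  set i₀ : Fin (4*n) := ⟨0, by omega⟩
  have hC : ∀ x ∈ C, x + allOnes (4*n) ∈ C := fun x hx ↦ allOnes_pmul π hπu x ▸ hclosed _ hu x hx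
  subst hD₁
  refine ⟨fun a ha ha0 hau ↦ ?_, fun a ha b hb ↦ card_image_pmul_inter_pair π hclosed hC ha hb i₀⟩
  have hD₁card : #{x ∈ C | x i₀ = 0} = Fintype.card (Fin (4*n)) := by
    have := two_mul_card_filter_apply_eq_zero hC i₀
    rw [Fintype.card_fin]
    omega
  have hD₁dist : ∀ x ∈ {x ∈ C | x i₀ = 0}, ∀ y ∈ {x ∈ C | x i₀ = 0}, x ≠ y →
      2 * hammingDist x y = Fintype.card (Fin (4*n)) := by
    intro x hx y hy hxy
    rw [mem_filter] at hx hy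
    have hxy' : x ≠ y + allOnes (4*n) := fun h ↦ by
      simpa [hx.2, hy.2, allOnes] using congrFun h i₀
    rw [hdist x hx.1 y hy.1 hxy hxy', Fintype.card_fin]
    ring
  have hj : (π a).symm i₀ ≠ i₀ := fun h ↦
    hfree a ha ha0 hau i₀ ((Equiv.symm_apply_eq _).mp h).symm
  have hbalance := two_mul_card_filter_apply_eq hD₁card (fun x hx ↦ (mem_filter.mp hx).2)
    hD₁dist hj (a i₀)
  rw [filter_inter_image_pmul π hclosed ha, card_image_of_injective _ (pmul_injective π a)]
  rw [Fintype.card_fin] at hbalance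
  omega
end

section
/- If (G, D, u) is a left Hadamard group then (G, D⁻¹, u) is also a left Hadamard group, where D⁻¹ = {d⁻¹ : d ∈ D}. -/
/-- `(G, D, u)` is a left Hadamard group of order `8n`: `G` is a finite group of order
`8n`, `u` is a central involution, and `D` is a `4n`-subset with `|aD ∩ D| = 2n` for
`a ∉ ⟨u⟩ = {1, u}` and `|aD ∩ {b, bu}| = 1` for all `a, b ∈ G`. -/
def IsLeftHadamardGroup {G : Type*} [Group G] [Fintype G] [DecidableEq G]
    (n : ℕ) (D : Finset G) (u : G) : Prop :=
  Fintype.card G = 8 * n ∧ u ≠ 1 ∧ u * u = 1 ∧ (∀ g : G, g * u = u * g) ∧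
  D.card = 4 * n ∧
  (∀ a : G, a ≠ 1 → a ≠ u → ((D.image (fun d => a * d)) ∩ D).card = 2 * n) ∧
  (∀ a b : G, ((D.image (fun d => a * d)) ∩ ({b, b * u} : Finset G)).card = 1)

namespace LHGAux

open Finset Matrix

variable {G : Type*} [Group G] [Fintype G] [DecidableEq G]

/-- The ±1 indicator of `D`. -/
noncomputable def eps (D : Finset G) (g : G) : ℝ := if g ∈ D then 1 else -1

section

variable (D : Finset G) (u : G)

lemma eps_sq (g : G) : eps D g * eps D g = 1 := by
  unfold eps; split <;> norm_num

/-- "Exactly one of `b, bu` lies in `D`" , extracted from the pair condition. -/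
lemma exactly_one (hu1 : u ≠ 1)
    (hpair : ∀ a b : G, ((D.image (fun d => a * d)) ∩ ({b, b * u} : Finset G)).card = 1)
    (b : G) : (b ∈ D) ↔ (b * u ∉ D) := by
  have h1 := hpair 1 b
  have himg : D.image (fun d => (1 : G) * d) = D := by simp
  rw [himg] at h1
  have hne : b ≠ b * u := by
    intro hb
    exact hu1 (mul_left_cancel (a := b) (show b * u = b * 1 by rw [mul_one]; exact hb.symm))
  rw [Finset.inter_comm, ← Finset.filter_mem_eq_inter] at h1
  rw [Finset.filter_insert, Finset.filter_singleton] at h1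
  by_cases h2 : b ∈ D <;> by_cases h3 : b * u ∈ D
  · exfalso; rw [if_pos h2, if_pos h3] at h1
    rw [Finset.card_insert_of_notMem (by simp [hne])] at h1
    simp at h1
  · simp [h2, h3]
  · simp [h2, h3]
  · exfalso; rw [if_neg h2, if_neg h3] at h1; simp at h1

lemma eps_mul_u (hu1 : u ≠ 1)
    (hpair : ∀ a b : G, ((D.image (fun d => a * d)) ∩ ({b, b * u} : Finset G)).card = 1)
    (g : G) : eps D (g * u) = - eps D g := by
  unfold eps
  by_cases hg : g ∈ D
  · have := (exactly_one D u hu1 hpair g).mp hg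
    simp [hg, this]
  · have hgu : g * u ∈ D := by
      by_contra hc
      exact hg ((exactly_one D u hu1 hpair g).mpr hc)
    simp [hg, hgu]

/-- Master sum expansion: turns the ±1 correlation sum into a count. -/
lemma sum_eps (n : ℕ) (hcard : Fintype.card G = 8 * n) (hD : D.card = 4 * n)
    (f : G → G) (hf : Function.Bijective f) :
    ∑ g : G, eps D g * eps D (f g)
      = 4 * ((Finset.univ.filter fun g => g ∈ D ∧ f g ∈ D).card : ℝ) - 8 * n := by
  have hpt : ∀ g : G, eps D g * eps D (f g)
      = 4 * ((if g ∈ D ∧ f g ∈ D then (1:ℝ) else 0))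
        - 2 * (if g ∈ D then (1:ℝ) else 0) - 2 * (if f g ∈ D then (1:ℝ) else 0) + 1 := by
    intro g
    unfold eps
    by_cases h1 : g ∈ D <;> by_cases h2 : f g ∈ D <;> simp [h1, h2] <;> norm_num
  rw [Finset.sum_congr rfl (fun g _ => hpt g)]
  have hsD : ∑ g : G, (if g ∈ D then (1:ℝ) else 0) = 4 * n := by
    rw [Finset.sum_boole]
    simp [Finset.filter_mem_eq_inter, hD]
  have hsDf : ∑ g : G, (if f g ∈ D then (1:ℝ) else 0) = 4 * n := by
    rw [Fintype.sum_bijective f hf _ (fun g => if g ∈ D then (1:ℝ) else 0) (fun x => rfl)]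
    exact hsD
  have hsboth : ∑ g : G, (if g ∈ D ∧ f g ∈ D then (1:ℝ) else 0)
      = ((Finset.univ.filter fun g => g ∈ D ∧ f g ∈ D).card : ℝ) := by
    rw [Finset.sum_boole]
  have hone : ∑ _g : G, (1:ℝ) = 8 * n := by
    simp [Finset.card_univ, hcard]
  simp only [Finset.sum_add_distrib, Finset.sum_sub_distrib, ← Finset.mul_sum]
  rw [hsD, hsDf, hsboth, hone]
  ring

end


/-- The crucial right-translation count, obtained from the left one via the
Hadamard-matrix trick (row orthogonality implies column orthogonality). -/
lemma key_right (n : ℕ) (D : Finset G) (u : G)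
    (hcard : Fintype.card G = 8 * n) (hu1 : u ≠ 1) (huu : u * u = 1)
    (hcomm : ∀ g : G, g * u = u * g) (hD : D.card = 4 * n)
    (hrow : ∀ a : G, a ≠ 1 → a ≠ u → ((D.image (fun d => a * d)) ∩ D).card = 2 * n)
    (hpair : ∀ a b : G, ((D.image (fun d => a * d)) ∩ ({b, b * u} : Finset G)).card = 1) :
    ∀ a : G, a ≠ 1 → a ≠ u →
      (Finset.univ.filter fun g => g ∈ D ∧ g * a ∈ D).card = 2 * n := by
  have hn : 0 < n := by
    have := Fintype.card_pos (α := G); omega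
  have huinv : u⁻¹ = u := inv_eq_of_mul_eq_one_right huu
  have heu : ∀ g : G, eps D (g * u) = - eps D g := eps_mul_u D u hu1 hpair
  have heu' : ∀ g : G, eps D (u * g) = - eps D g := fun g => by
    rw [← hcomm]; exact heu g
  -- left count as a filter
  have hcountL : ∀ a : G, a ≠ 1 → a ≠ u →
      ((Finset.univ.filter fun g => g ∈ D ∧ a * g ∈ D).card) = 2 * n := by
    intro a ha1 hau
    have himg : (D.image (fun d => a * d)) ∩ D
        = (Finset.univ.filter fun g => g ∈ D ∧ a * g ∈ D).image (fun g => a * g) := by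
      ext x
      simp only [Finset.mem_inter, Finset.mem_image, Finset.mem_filter, Finset.mem_univ,
        true_and]
      constructor
      · rintro ⟨⟨d, hd, rfl⟩, hx⟩; exact ⟨d, ⟨hd, hx⟩, rfl⟩
      · rintro ⟨g, ⟨hg, hag⟩, rfl⟩; exact ⟨⟨g, hg, rfl⟩, hag⟩
    have := hrow a ha1 hau
    rw [himg, Finset.card_image_of_injective _ (mul_right_injective a)] at this
    exact this
  -- correlation sums
  have hS : ∀ a : G, a ≠ 1 → a ≠ u → ∑ g : G, eps D g * eps D (a * g) = 0 := by
    intro a ha1 hau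
    rw [sum_eps D n hcard hD (fun g => a * g) (Group.mulLeft_bijective a),
      hcountL a ha1 hau]
    push_cast; ring
  have hS1 : ∑ g : G, eps D g * eps D g = 8 * n := by
    rw [Finset.sum_congr rfl (fun g _ => eps_sq D g)]
    simp [Finset.card_univ, hcard]
  have hSu : ∑ g : G, eps D g * eps D (u * g) = -(8 * n) := by
    have : ∀ g : G, eps D g * eps D (u * g) = -1 := by
      intro g; rw [heu' g]
      have := eps_sq D g
      nlinarith [eps_sq D g]
    rw [Finset.sum_congr rfl (fun g _ => this g)]
    simp [Finset.card_univ, hcard]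
  -- matrices
  set M : Matrix G G ℝ := Matrix.of fun g h => eps D (g⁻¹ * h) with hMdef
  set U : Matrix G G ℝ := Matrix.of fun g h => if g * u = h then (1:ℝ) else 0 with hUdef
  have hMU : M * U = -M := by
    ext g h
    rw [Matrix.mul_apply]
    rw [Finset.sum_eq_single (h * u) (fun k _ hk => by
      have : ¬ (k * u = h) := by
        intro hc; apply hk; rw [← hc, mul_assoc, huu, mul_one]
      simp [hUdef, this]) (by simp)]
    have hhu : (h * u) * u = h := by rw [mul_assoc, huu, mul_one]
    simp only [hMdef, hUdef, Matrix.of_apply, Matrix.neg_apply]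
    rw [if_pos hhu, mul_one, ← mul_assoc, heu (g⁻¹ * h)]
  have hUM : U * M = -M := by
    ext g h
    rw [Matrix.mul_apply]
    rw [Finset.sum_eq_single (g * u) (fun k _ hk => by
      simp [hUdef, Ne.symm hk]) (by simp)]
    simp only [hMdef, hUdef, Matrix.of_apply, Matrix.neg_apply, eq_self_iff_true,
      if_true, one_mul]
    rw [_root_.mul_inv_rev, huinv, mul_assoc, heu' (g⁻¹ * h)]
  have hUU : U * U = 1 := by
    ext g h
    rw [Matrix.mul_apply]
    rw [Finset.sum_eq_single (g * u) (fun k _ hk => by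
      simp [hUdef, Ne.symm hk]) (by simp)]
    have hgu : (g * u) * u = g := by rw [mul_assoc, huu, mul_one]
    simp only [hUdef, Matrix.of_apply, Matrix.one_apply, eq_self_iff_true, if_true,
      one_mul, hgu]
  have hUT : Uᵀ = U := by
    ext g h
    simp only [Matrix.transpose_apply, hUdef, Matrix.of_apply]
    by_cases hc : g * u = h
    · rw [if_pos hc, if_pos (by rw [← hc, mul_assoc, huu, mul_one])]
    · rw [if_neg (fun hc2 => hc (by rw [← hc2, mul_assoc, huu, mul_one])), if_neg hc]
  have hMM : M * Mᵀ = (8 * n : ℝ) • (1 - U) := by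
    ext g h
    rw [Matrix.mul_apply]
    have hre : ∑ k, M g k * Mᵀ k h = ∑ m, eps D m * eps D ((h⁻¹ * g) * m) := by
      refine (Fintype.sum_bijective (fun m => g * m) (Group.mulLeft_bijective g)
        _ _ (fun m => ?_)).symm
      simp only [hMdef, Matrix.transpose_apply, Matrix.of_apply, inv_mul_cancel_left,
        mul_assoc]
    rw [hre]
    simp only [Matrix.smul_apply, Matrix.sub_apply, Matrix.one_apply, hUdef,
      Matrix.of_apply, smul_eq_mul]
    by_cases hgh : g = h
    · subst hgh
      have hgu : ¬ (g * u = g) := fun hc => hu1 (mul_left_cancel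
        (show g * u = g * 1 by rw [mul_one]; exact hc))
      simp only [inv_mul_cancel, one_mul, eq_self_iff_true, if_true]
      rw [hS1, if_neg hgu]
      ring
    · by_cases hgu : g * u = h
      · have ha : h⁻¹ * g = u := by
          rw [← hgu, _root_.mul_inv_rev, huinv, mul_assoc, inv_mul_cancel, mul_one]
        rw [ha, hSu, if_neg hgh, if_pos hgu]
        ring
      · have ha1 : h⁻¹ * g ≠ 1 := fun hc => hgh (inv_mul_eq_one.mp hc).symm
        have hau : h⁻¹ * g ≠ u := fun hc => hgu (by
          have hgh' : g = h * u := inv_mul_eq_iff_eq_mul.mp hc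
          rw [hgh', mul_assoc, huu, mul_one])
        rw [hS (h⁻¹ * g) ha1 hau]
        simp only [if_neg (fun hc : g = h => hgh hc), if_neg hgu]
        ring
  -- the projection Q
  set Q : Matrix G G ℝ := (2:ℝ)⁻¹ • (1 - U) with hQdef
  have half2 : ∀ A : Matrix G G ℝ, (2:ℝ)⁻¹ • (A + A) = A := fun A => by
    rw [← two_smul ℝ A, smul_smul]; norm_num
  have hMQ : M * Q = M := by
    rw [hQdef, mul_smul_comm, mul_sub, mul_one, hMU, sub_neg_eq_add, half2]
  have hQM : Q * M = M := by
    rw [hQdef, smul_mul_assoc, sub_mul, one_mul, hUM, sub_neg_eq_add, half2]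
  have hUQ : U * Q = -Q := by
    rw [hQdef, mul_smul_comm, mul_sub, mul_one, hUU]
    rw [show (U - 1 : Matrix G G ℝ) = -(1 - U) by abel, smul_neg]
  have hQQ : Q * Q = Q := by
    calc Q * Q = (2:ℝ)⁻¹ • ((1 - U) * Q) := by rw [hQdef, smul_mul_assoc]
    _ = (2:ℝ)⁻¹ • (Q - U * Q) := by rw [sub_mul, one_mul]
    _ = (2:ℝ)⁻¹ • (Q + Q) := by rw [hUQ, sub_neg_eq_add]
    _ = Q := half2 Q
  have hQT : Qᵀ = Q := by
    rw [hQdef, Matrix.transpose_smul, Matrix.transpose_sub, Matrix.transpose_one, hUT]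
  have hQMT : Q * Mᵀ = Mᵀ := by
    rw [← hQT, ← Matrix.transpose_mul, hMQ]
  have hMTQ : Mᵀ * Q = Mᵀ := by
    rw [← hQT, ← Matrix.transpose_mul, hQM]
  set c : ℝ := 16 * n with hcdef
  have hc : c ≠ 0 := by
    rw [hcdef]; positivity
  have hMMQ : M * Mᵀ = c • Q := by
    rw [hMM, hQdef, smul_smul, hcdef]
    congr 1
    rw [mul_comm (16 * (n:ℝ)) _]
    rw [← mul_assoc]
    norm_num
  set N : Matrix G G ℝ := M + (1 - Q) with hNdef
  set R : Matrix G G ℝ := c⁻¹ • Mᵀ + (1 - Q) with hRdef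
  have p4 : (1 - Q) * (1 - Q) = 1 - Q := by
    rw [mul_sub, mul_one, sub_mul, one_mul, hQQ, sub_self, sub_zero]
  have hNR : N * R = 1 := by
    rw [hNdef, hRdef, add_mul, mul_add, mul_add]
    rw [mul_smul_comm, hMMQ, smul_smul, inv_mul_cancel₀ hc, one_smul]
    rw [show M * (1 - Q) = 0 by rw [mul_sub, mul_one, hMQ, sub_self]]
    rw [show (1 - Q) * (c⁻¹ • Mᵀ) = 0 by
      rw [mul_smul_comm, sub_mul, one_mul, hQMT, sub_self, smul_zero]]
    rw [p4]
    abel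
  have hRN : R * N = 1 := mul_eq_one_comm.mp hNR
  have hMTM : Mᵀ * M = c • Q := by
    rw [hRdef, hNdef, add_mul, mul_add, mul_add, smul_mul_assoc] at hRN
    rw [show c⁻¹ • Mᵀ * (1 - Q) = 0 by
      rw [smul_mul_assoc, mul_sub, mul_one, hMTQ, sub_self, smul_zero]] at hRN
    rw [show (1 - Q) * M = 0 by rw [sub_mul, one_mul, hQM, sub_self]] at hRN
    rw [p4, add_zero, zero_add] at hRN
    have h2 : c⁻¹ • (Mᵀ * M) = Q := by
      have := eq_sub_of_add_eq hRN
      rw [this]; abel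
    calc Mᵀ * M = c • (c⁻¹ • (Mᵀ * M)) := by
          rw [smul_smul, mul_inv_cancel₀ hc, one_smul]
    _ = c • Q := by rw [h2]
  -- extract the right-translation correlation
  have hT : ∀ a : G, a ≠ 1 → a ≠ u → ∑ g : G, eps D g * eps D (g * a) = 0 := by
    intro a ha1 hau
    have hent : (Mᵀ * M) 1 a = (c • Q) 1 a := by rw [hMTM]
    rw [Matrix.mul_apply] at hent
    have hre : ∑ k, Mᵀ 1 k * M k a = ∑ g : G, eps D g * eps D (g * a) := by
      refine (Fintype.sum_bijective (fun g : G => g⁻¹) inv_involutive.bijective _ _ (fun g => ?_)).symm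
      simp only [hMdef, Matrix.transpose_apply, Matrix.of_apply, inv_inv, mul_one]
    rw [hre] at hent
    rw [hent, hQdef]
    simp only [Matrix.smul_apply, Matrix.sub_apply, Matrix.one_apply, hUdef,
      Matrix.of_apply, smul_eq_mul]
    rw [if_neg (fun hc : (1:G) = a => ha1 hc.symm),
      if_neg (fun hc : (1:G) * u = a => hau (by rw [← hc, one_mul]))]
    ring
  -- conclude
  intro a ha1 hau
  have h0 := hT a ha1 hau
  rw [sum_eps D n hcard hD (fun g => g * a) (Group.mulRight_bijective a)] at h0
  have hcast : ((Finset.univ.filter fun g => g ∈ D ∧ g * a ∈ D).card : ℝ) = ((2 * n : ℕ) : ℝ) := by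
    push_cast
    linarith
  exact_mod_cast hcast

end LHGAux

/-- If `(G, D, u)` is a left Hadamard group then so is `(G, D⁻¹, u)`. -/
theorem stmt_7 {G : Type*} [Group G] [Fintype G] [DecidableEq G]
    (n : ℕ) (D : Finset G) (u : G)
    (h : IsLeftHadamardGroup n D u) :
    IsLeftHadamardGroup n (D.image (fun d => d⁻¹)) u := by
  obtain ⟨hcard, hu1, huu, hcomm, hD, hrow, hpair⟩ := h
  have huinv : u⁻¹ = u := inv_eq_of_mul_eq_one_right huu
  have hkey := LHGAux.key_right n D u hcard hu1 huu hcomm hD hrow hpair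
  refine ⟨hcard, hu1, huu, hcomm, ?_, ?_, ?_⟩
  · rw [Finset.card_image_of_injective _ inv_injective, hD]
  · -- the translate-intersection condition
    intro a ha1 hau
    have hset : ((D.image (fun d => d⁻¹)).image (fun d => a * d)) ∩ (D.image (fun d => d⁻¹))
        = (Finset.univ.filter fun g => g ∈ D ∧ g * a ∈ D).image (fun g => g⁻¹) := by
      ext x
      simp only [Finset.mem_inter, Finset.mem_image, Finset.mem_filter, Finset.mem_univ,
        true_and]
      constructor
      · rintro ⟨⟨y, ⟨d, hd, rfl⟩, rfl⟩, ⟨f, hf, hfx⟩⟩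
        refine ⟨f, ⟨hf, ?_⟩, hfx⟩
        have hfd : f = d * a⁻¹ := by
          have : f⁻¹⁻¹ = (a * d⁻¹)⁻¹ := by rw [hfx]
          rw [inv_inv] at this
          rw [this]
          group
        rw [hfd, mul_assoc, inv_mul_cancel, mul_one]
        exact hd
      · rintro ⟨g, ⟨hg, hga⟩, rfl⟩
        exact ⟨⟨(g * a)⁻¹, ⟨g * a, hga, rfl⟩, by group⟩, ⟨g, hg, rfl⟩⟩
    rw [hset, Finset.card_image_of_injective _ inv_injective]
    exact hkey a ha1 hau
  · -- the pair condition
    intro a b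
    have hmemE : ∀ x : G, (x ∈ D.image (fun d => d⁻¹)) ↔ x⁻¹ ∈ D := by
      intro x
      simp only [Finset.mem_image]
      constructor
      · rintro ⟨d, hd, rfl⟩; simpa using hd
      · intro hx; exact ⟨x⁻¹, hx, inv_inv x⟩
    have hmemX : ∀ x : G,
        (x ∈ (D.image (fun d => d⁻¹)).image (fun d => a * d)) ↔ x⁻¹ * a ∈ D := by
      intro x
      simp only [Finset.mem_image]
      constructor
      · rintro ⟨y, hy, rfl⟩
        have hy' : y⁻¹ ∈ D := by
          obtain ⟨d, hd, rfl⟩ := hy; simpa using hd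
        rw [show (a * y)⁻¹ * a = y⁻¹ by group]
        exact hy'
      · intro hx
        refine ⟨a⁻¹ * x, ?_, by group⟩
        refine ⟨(a⁻¹ * x)⁻¹, ?_, inv_inv _⟩
        rw [show (a⁻¹ * x)⁻¹ = x⁻¹ * a by group]
        exact hx
    have h1 : (b ∈ (D.image (fun d => d⁻¹)).image (fun d => a * d)) ↔ b⁻¹ * a ∈ D :=
      hmemX b
    have h2 : (b * u ∈ (D.image (fun d => d⁻¹)).image (fun d => a * d))
        ↔ (b⁻¹ * a) * u ∈ D := by
      rw [hmemX]
      rw [show (b * u)⁻¹ * a = (b⁻¹ * a) * u by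
        rw [_root_.mul_inv_rev, huinv, mul_assoc, ← hcomm (b⁻¹ * a)]]
    have hxor := LHGAux.exactly_one D u hu1 hpair (b⁻¹ * a)
    have hne : b ≠ b * u := fun hb =>
      hu1 (mul_left_cancel (a := b) (show b * u = b * 1 by rw [mul_one]; exact hb.symm))
    rw [Finset.inter_comm, ← Finset.filter_mem_eq_inter, Finset.filter_insert,
      Finset.filter_singleton]
    by_cases hb : b⁻¹ * a ∈ D
    · have hb1 := h1.mpr hb
      have hb2 : ¬ (b * u ∈ (D.image (fun d => d⁻¹)).image (fun d => a * d)) := by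
        rw [h2]; exact hxor.mp hb
      rw [if_pos hb1, if_neg hb2]
      simp
    · have hb1 : ¬ (b ∈ (D.image (fun d => d⁻¹)).image (fun d => a * d)) :=
        fun hc => hb (h1.mp hc)
      have hb2 : b * u ∈ (D.image (fun d => d⁻¹)).image (fun d => a * d) :=
        h2.mpr (by by_contra hc; exact hb (hxor.mpr hc))
      rw [if_neg hb1, if_pos hb2]
      simp
end

section
/- Let C be an Hadamard code of length 4n and let s ∈ K(C) with s ∉ {0, u}. Then the projection of C onto the support of s is an Hadamard code of length 2n: it consists of 2n vectors and their complements, pairwise at Hamming distance n. -/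
/-!
Let `S` be the support of the kernel element `s` and `π` the projection onto `S`. Adding `s`
complements the coordinates in `S` and fixes the others, so for all words
`d(v, w) + |S| = d(v + s, w) + 2 d(π v, π w)`, and `|S| = d(s, 0) = 2n`. If `v, w ∈ C` have
projections that are neither equal nor complementary, then `v + s ∈ C` and both `d(v, w)` and
`d(v + s, w)` equal `2n`, so `d(π v, π w) = n`. If `π v = π w`, the same identity forces
`w ∈ {v, v + s + u}`. Hence `π` is at most two-to-one on `C` and `|π C| ≥ 4n`, while Plotkin's
bound for codes that are equidistant up to complements gives `|π C| ≤ 2|S| = 4n`.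
-/

open Finset Fintype

namespace BinaryCode

variable {ι : Type*}

theorem add_add_cancel_right (x z : ι → ZMod 2) : x + z + z = x :=
  funext fun i => CharTwo.add_cancel_right (x i) (z i)

theorem add_eq_iff_eq_add {x y z : ι → ZMod 2} : x + z = y ↔ x = y + z :=
  ⟨fun h => h ▸ (add_add_cancel_right x z).symm, fun h => h ▸ add_add_cancel_right y z⟩

theorem add_one_ne_self [Nonempty ι] (x : ι → ZMod 2) : x + 1 ≠ x :=
  add_ne_left.mpr one_ne_zero

variable [Fintype ι]

theorem hammingDist_eq_sum (v w : ι → ZMod 2) :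
    hammingDist v w = ∑ i, if v i ≠ w i then 1 else 0 := by
  rw [hammingDist, card_filter]

theorem hammingDist_add_right (v w x : ι → ZMod 2) :
    hammingDist (v + x) (w + x) = hammingDist v w := by
  simp only [hammingDist, Pi.add_apply, ne_eq, add_left_inj]

theorem hammingDist_add_hammingDist_add_one (v w : ι → ZMod 2) :
    hammingDist v w + hammingDist v (w + 1) = card ι := by
  have key : ∀ a b : ZMod 2, ((if a ≠ b then 1 else 0) + if a ≠ b + 1 then 1 else 0) = 1 := by
    decide
  simp only [hammingDist_eq_sum, ← sum_add_distrib, Pi.add_apply, Pi.one_apply, key,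
    sum_const, card_univ, smul_eq_mul, mul_one]

def signVector (v : ι → ZMod 2) : EuclideanSpace ℝ ι :=
  WithLp.toLp 2 fun i => if v i = 0 then 1 else -1

theorem inner_signVector (v w : ι → ZMod 2) :
    inner ℝ (signVector v) (signVector w) = card ι - 2 * (hammingDist v w : ℝ) := by
  have key : ∀ a b : ZMod 2, ((if b = 0 then 1 else -1) * (if a = 0 then 1 else -1) : ℝ)
      = 1 - 2 * if a ≠ b then 1 else 0 := by
    have h01 : ∀ a : ZMod 2, a = 0 ∨ a = 1 := by decide
    intro a b
    rcases h01 a with rfl | rfl <;> rcases h01 b with rfl | rfl <;> norm_num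
  simp only [signVector, PiLp.inner_apply, RCLike.inner_apply, conj_trivial, key,
    hammingDist_eq_sum, Nat.cast_sum, Nat.cast_ite, Nat.cast_one, Nat.cast_zero, mul_sum,
    sum_sub_distrib, sum_const, card_univ, nsmul_eq_mul, mul_one]

/-- Plotkin's bound in the equidistant case: the sign vectors of the words are orthogonal. -/
theorem card_le_of_pairwise_hammingDist_eq [Nonempty ι] {D : Finset (ι → ZMod 2)} {d : ℕ}
    (hD : (D : Set (ι → ZMod 2)).Pairwise fun x y => hammingDist x y = d)
    (hd : 2 * d = card ι) : #D ≤ card ι := by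
  have hne : ∀ x : D, signVector (x : ι → ZMod 2) ≠ 0 := by
    intro x h
    have := inner_signVector (x : ι → ZMod 2) x
    rw [h, inner_zero_left, hammingDist_self, Nat.cast_zero, mul_zero, sub_zero] at this
    exact (Nat.cast_ne_zero.mpr card_ne_zero) this.symm
  have horth : Pairwise fun x y : D =>
      inner ℝ (signVector (x : ι → ZMod 2)) (signVector y) = 0 := by
    intro x y hxy
    rw [inner_signVector, hD x.2 y.2 (Subtype.coe_ne_coe.mpr hxy), ← hd]
    push_cast
    ring
  simpa [finrank_euclideanSpace] using
    (linearIndependent_of_ne_zero_of_inner_eq_zero hne horth).fintype_card_le_finrank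

def IsEquidistantUpToCompl (C : Finset (ι → ZMod 2)) (d : ℕ) : Prop :=
  (C : Set (ι → ZMod 2)).Pairwise fun x y => x ≠ y + 1 → hammingDist x y = d

namespace IsEquidistantUpToCompl

variable {C : Finset (ι → ZMod 2)} {d : ℕ}

theorem union_image_add_one (hC : IsEquidistantUpToCompl C d) (hd : 2 * d = card ι) :
    IsEquidistantUpToCompl (C ∪ C.image (· + 1)) d := by
  have cross : ∀ x ∈ C, ∀ y ∈ C, x ≠ y → x ≠ y + 1 → hammingDist x (y + 1) = d := by
    intro x hx y hy hne hne1
    have := hammingDist_add_hammingDist_add_one x y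
    rw [hC hx hy hne hne1] at this
    omega
  simp only [IsEquidistantUpToCompl, coe_union, coe_image, Set.pairwise_union]
  refine ⟨hC, ?_, ?_⟩
  · rintro _ ⟨x, hx, rfl⟩ _ ⟨y, hy, rfl⟩ hne hne1
    rw [hammingDist_add_right]
    exact hC hx hy (fun h => hne (h ▸ rfl)) fun h => hne1 (h ▸ rfl)
  · rintro x hx _ ⟨y, hy, rfl⟩ hne
    refine ⟨fun hne1 => cross x hx y hy (by rwa [add_add_cancel_right] at hne1) hne,
      fun hne1 => ?_⟩
    rw [hammingDist_comm]
    exact cross x hx y hy (fun h => hne1 (h ▸ rfl)) hne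

/-- The words of `C ∪ (C + 1)` vanishing at a fixed coordinate are pairwise at distance `d`, and
together with their complements they cover `C`. -/
theorem card_le [Nonempty ι] (hC : IsEquidistantUpToCompl C d) (hd : 2 * d = card ι) :
    #C ≤ 2 * card ι := by
  obtain ⟨i⟩ := ‹Nonempty ι›
  set D := (C ∪ C.image (· + 1)).filter (· i = 0)
  have hD : (D : Set (ι → ZMod 2)).Pairwise fun x y => hammingDist x y = d := by
    intro x hx y hy hne
    rw [mem_coe, mem_filter] at hx hy
    refine hC.union_image_add_one hd hx.1 hy.1 hne fun h => ?_
    have := congrFun h i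
    simp only [Pi.add_apply, hx.2, hy.2, Pi.one_apply, zero_add] at this
    exact zero_ne_one this
  have hCD : C ⊆ D ∪ D.image (· + 1) := by
    intro x hx
    by_cases hxi : x i = 0
    · exact mem_union_left _ (mem_filter.mpr ⟨mem_union_left _ hx, hxi⟩)
    · refine mem_union_right _ (mem_image.mpr ⟨x + 1, mem_filter.mpr
        ⟨mem_union_right _ (mem_image_of_mem _ hx), ?_⟩, add_add_cancel_right x 1⟩)
      exact (by decide : ∀ a : ZMod 2, a ≠ 0 → a + 1 = 0) _ hxi
  calc #C ≤ #(D ∪ D.image (· + 1)) := card_le_card hCD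
    _ ≤ #D + #D := (card_union_le _ _).trans (Nat.add_le_add_left card_image_le _)
    _ ≤ 2 * card ι := by have := card_le_of_pairwise_hammingDist_eq hD hd; omega

end IsEquidistantUpToCompl

section Support

variable (s : ι → ZMod 2)

local notation "π" => Subtype.restrict (fun i => s i ≠ 0)

theorem hammingDist_restrict_eq_sum (v w : ι → ZMod 2) :
    hammingDist (π v) (π w) = ∑ i, if s i ≠ 0 then (if v i ≠ w i then 1 else 0) else 0 := by
  rw [hammingDist_eq_sum, ← sum_filter (s · ≠ 0) fun i => if v i ≠ w i then 1 else 0,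
    sum_subtype _ fun i => mem_filter_univ i]
  rfl

theorem hammingDist_add_hammingNorm (v w : ι → ZMod 2) :
    hammingDist v w + hammingNorm s = hammingDist (v + s) w + 2 * hammingDist (π v) (π w) := by
  have key : ∀ a b c : ZMod 2, ((if a ≠ b then 1 else 0) + if c ≠ 0 then 1 else 0) =
      (if a + c ≠ b then 1 else 0) + 2 * if c ≠ 0 then (if a ≠ b then 1 else 0) else 0 := by
    decide
  rw [hammingDist_restrict_eq_sum]
  simp only [hammingDist_eq_sum, hammingNorm, card_filter, mul_sum, ← sum_add_distrib,
    Pi.add_apply, key]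

theorem card_support_eq_hammingNorm : card {i // s i ≠ 0} = hammingNorm s :=
  Fintype.card_subtype _

omit [Fintype ι] in
theorem restrict_add_self (v : ι → ZMod 2) : π (v + s) = π v + 1 :=
  funext fun j => congrArg (v j + ·) ((by decide : ∀ a : ZMod 2, a ≠ 0 → a = 1) _ j.2)

omit [Fintype ι] in
theorem restrict_add_one (v : ι → ZMod 2) : π (v + 1) = π v + 1 := rfl

variable {s} {C : Finset (ι → ZMod 2)} {d : ℕ}

omit [Fintype ι] in
theorem nonempty_support (hs0 : s ≠ 0) : Nonempty {i // s i ≠ 0} :=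
  let ⟨i, hi⟩ := Function.ne_iff.mp hs0
  ⟨⟨i, hi⟩⟩

theorem IsEquidistantUpToCompl.image_restrict (hC : IsEquidistantUpToCompl C d)
    (hs : ∀ v ∈ C, v + s ∈ C) {d' : ℕ} (hd' : 2 * d' = hammingNorm s) :
    IsEquidistantUpToCompl (C.image π) d' := by
  intro x hx y hy hne hne1
  obtain ⟨v, hv, rfl⟩ := mem_image.mp hx
  obtain ⟨w, hw, rfl⟩ := mem_image.mp hy
  have hvw : hammingDist v w = d :=
    hC hv hw (ne_of_apply_ne π hne) (ne_of_apply_ne π (by rwa [restrict_add_one]))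
  have hsvw : hammingDist (v + s) w = d := by
    refine hC (hs v hv) hw (ne_of_apply_ne π ?_) (ne_of_apply_ne π ?_)
    · rwa [restrict_add_self, Ne, add_eq_iff_eq_add]
    · rw [restrict_add_self, restrict_add_one]
      exact fun h => hne (add_right_cancel h)
  have := hammingDist_add_hammingNorm s v w
  omega

theorem IsEquidistantUpToCompl.card_le_two_mul_card_image_restrict
    (hC : IsEquidistantUpToCompl C d) (hs : ∀ v ∈ C, v + s ∈ C) (hs0 : s ≠ 0) :
    #C ≤ 2 * #(C.image π) := by
  have := nonempty_support hs0
  refine card_le_mul_card_image C 2 fun _ hb => ?_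
  obtain ⟨v, hv, rfl⟩ := mem_image.mp hb
  refine (card_le_card fun w hw => ?_).trans (card_le_two (a := v) (b := v + s + 1))
  obtain ⟨hw, hwv⟩ := mem_filter.mp hw
  rw [mem_insert, mem_singleton]
  by_contra! h
  have hd : hammingDist w v = d := by
    refine hC hw hv h.1 (ne_of_apply_ne π ?_)
    rw [hwv, restrict_add_one]
    exact (add_one_ne_self _).symm
  have hd' : hammingDist (w + s) v = d := by
    refine hC (hs w hw) hv (ne_of_apply_ne π ?_) fun h' => h.2 ?_
    · rw [restrict_add_self, hwv]
      exact add_one_ne_self _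
    · rw [add_eq_iff_eq_add.mp h', add_right_comm]
  have := hammingDist_add_hammingNorm s w v
  rw [hwv, hammingDist_self, hd, hd'] at this
  exact hs0 (hammingNorm_eq_zero.mp (by omega))

theorem add_one_mem_image_restrict (hs : ∀ v ∈ C, v + s ∈ C) {x : {i // s i ≠ 0} → ZMod 2}
    (hx : x ∈ C.image π) : x + 1 ∈ C.image π := by
  obtain ⟨v, hv, rfl⟩ := mem_image.mp hx
  exact restrict_add_self s v ▸ mem_image_of_mem _ (hs v hv)

end Support

end BinaryCode

open BinaryCode

theorem stmt_10_general (n : ℕ) (C : Finset (Fin (4*n) → ZMod 2))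
    (h0 : (0 : Fin (4*n) → ZMod 2) ∈ C)
    (hcard : C.card = 8*n)
    (hdist : ∀ x ∈ C, ∀ y ∈ C, x ≠ y → x ≠ y + allOnes (4*n) → hammingDist x y = 2*n)
    (s : Fin (4*n) → ZMod 2)
    (hs : C.image (fun v => v + s) = C) (hs0 : s ≠ 0) (hsu : s ≠ allOnes (4*n))
    (P : Finset ({i : Fin (4*n) // s i ≠ 0} → ZMod 2))
    (hP : P = C.image (fun v => fun j : {i : Fin (4*n) // s i ≠ 0} => v j.val)) :
    P.card = 4*n ∧
    (∀ x ∈ P, x + (fun _ => 1) ∈ P) ∧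
    (∀ x ∈ P, ∀ y ∈ P, x ≠ y → x ≠ y + (fun _ => (1 : ZMod 2)) → hammingDist x y = n) := by
  have hkernel : ∀ v ∈ C, v + s ∈ C := fun v hv => hs ▸ mem_image_of_mem _ hv
  have hC : IsEquidistantUpToCompl C (2 * n) := hdist
  have hnorm : hammingNorm s = 2 * n := by
    rw [← hammingDist_zero_right]
    exact hC (zero_add s ▸ hkernel 0 h0) h0 hs0 (by rwa [zero_add])
  have : Nonempty {i // s i ≠ 0} := nonempty_support hs0
  replace hP : P = C.image (Subtype.restrict (s · ≠ 0)) := hP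
  subst hP
  have hPn : IsEquidistantUpToCompl (C.image (Subtype.restrict (s · ≠ 0))) n :=
    hC.image_restrict hkernel (by omega)
  refine ⟨le_antisymm ?_ ?_, fun x hx => add_one_mem_image_restrict hkernel hx, hPn⟩
  · have := hPn.card_le (by rw [card_support_eq_hammingNorm, hnorm])
    rwa [card_support_eq_hammingNorm, hnorm, ← mul_assoc] at this
  · have := hC.card_le_two_mul_card_image_restrict hkernel hs0
    omega

/-- Let `C` be an Hadamard code of length `4n` and `s ∈ K(C)`, `s ∉ {0, u}`.
Then the projection of `C` onto the support of `s` is an Hadamard code of length `2n`: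
it consists of `2n` vectors and their complements, pairwise at Hamming distance `n`. -/
theorem stmt_10 (n : ℕ) (hn : 0 < n) (C : Finset (Fin (4*n) → ZMod 2))
    (h0 : (0 : Fin (4*n) → ZMod 2) ∈ C) (hu : allOnes (4*n) ∈ C)
    (hcard : C.card = 8*n)
    (hdist : ∀ x ∈ C, ∀ y ∈ C, x ≠ y → x ≠ y + allOnes (4*n) → hammingDist x y = 2*n)
    (s : Fin (4*n) → ZMod 2)
    (hs : C.image (fun v => v + s) = C) (hs0 : s ≠ 0) (hsu : s ≠ allOnes (4*n))
    (P : Finset ({i : Fin (4*n) // s i ≠ 0} → ZMod 2))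
    (hP : P = C.image (fun v => fun j : {i : Fin (4*n) // s i ≠ 0} => v j.val)) :
    P.card = 4*n ∧
    (∀ x ∈ P, x + (fun _ => 1) ∈ P) ∧
    (∀ x ∈ P, ∀ y ∈ P, x ≠ y → x ≠ y + (fun _ => (1 : ZMod 2)) → hammingDist x y = n) :=
  stmt_10_general n C h0 hcard hdist s hs hs0 hsu P hP
end

section
/- In a propelinear code (C, ·), a codeword x belongs to the kernel K(C) if and only if π_x ∈ Aut(C), i.e. π_x(C) = C. -/
namespace Set.Finite

variable {α : Type*} {C : Set α} {f g : α → α}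

theorem image_eq_of_mapsTo (hC : C.Finite) (hf : Function.Injective f) (h : MapsTo f C C) :
    f '' C = C :=
  ((hC.injOn_iff_bijOn_of_mapsTo h).mp hf.injOn).image_eq

theorem image_eq_iff_image_eq_of_mapsTo_comp (hC : C.Finite) (hg : Function.Involutive g)
    (hf : Function.Injective f) (hgf : MapsTo (g ∘ f) C C) : g '' C = C ↔ f '' C = C := by
  constructor
  · intro hgC
    refine hC.image_eq_of_mapsTo hf fun y hy => ?_
    rw [← hg (f y), ← hgC]
    exact mem_image_of_mem g (hgf hy)
  · intro hfC
    refine hC.image_eq_of_mapsTo hg.injective fun y hy => ?_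
    rw [← hfC] at hy
    obtain ⟨z, hz, rfl⟩ := hy
    exact hgf hz

end Set.Finite

theorem add_left_involutive_of_charP_two {ι R : Type*} [Semiring R] [CharP R 2] (x : ι → R) :
    Function.Involutive (· + x) :=
  fun v => funext fun i => CharTwo.add_cancel_right (v i) (x i)

theorem permAct_injective {m : ℕ} (σ : Equiv.Perm (Fin m)) : Function.Injective (permAct σ) :=
  fun v w h => funext fun j => by simpa [permAct] using congrFun h (σ j)

theorem stmt_11_general {m : ℕ} (C : Set (Fin m → ZMod 2))
    (π : (Fin m → ZMod 2) → Equiv.Perm (Fin m))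
    (hclosed : ∀ x ∈ C, ∀ y ∈ C, pmul π x y ∈ C)
    (x : Fin m → ZMod 2) (hx : x ∈ C) :
    ((fun v => v + x) '' C = C) ↔ (permAct (π x) '' C = C) := by
  have hleft : Set.MapsTo ((· + x) ∘ permAct (π x)) C C := fun y hy => by
    simpa only [Function.comp_apply, pmul, add_comm] using hclosed x hx y hy
  exact (Set.toFinite C).image_eq_iff_image_eq_of_mapsTo_comp
    (add_left_involutive_of_charP_two x) (permAct_injective (π x)) hleft

/-- In a propelinear code `(C, ·)`, a codeword `x` belongs to the kernel
`K(C) = {z : C + z = C}` if and only if `π_x` is an automorphism of `C`,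
i.e. `π_x(C) = C`. -/
theorem stmt_11 {m : ℕ} (C : Set (Fin m → ZMod 2)) (h0 : (0 : Fin m → ZMod 2) ∈ C)
    (π : (Fin m → ZMod 2) → Equiv.Perm (Fin m))
    (hclosed : ∀ x ∈ C, ∀ y ∈ C, pmul π x y ∈ C)
    (hhom : ∀ x ∈ C, ∀ y ∈ C, π (pmul π x y) = π x * π y)
    (x : Fin m → ZMod 2) (hx : x ∈ C) :
    ((fun v => v + x) '' C = C) ↔ (permAct (π x) '' C = C) :=
  stmt_11_general C π hclosed x hx
end

section
/- In a propelinear code (C, ·) containing the all-ones vector u with π_u = id, the kernel K(C) ∩ C is a subgroup of (C, ·), and for any c ∈ C, the coset c · (K(C) ∩ C) equals the translate c + (K(C) ∩ C). -/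
/-- The kernel of a binary code intersected with the code:
`{z ∈ C : C + z = C}`. -/
def kerCode {m : ℕ} (C : Set (Fin m → ZMod 2)) : Set (Fin m → ZMod 2) :=
  {z | z ∈ C ∧ (fun v => v + z) '' C = C}


section aux
variable {m : ℕ}

lemma vadd_self (v : Fin m → ZMod 2) : v + v = 0 := by
  funext i
  exact CharTwo.add_self_eq_zero (v i)

lemma permAct_mul (σ τ : Equiv.Perm (Fin m)) (v : Fin m → ZMod 2) :
    permAct (σ * τ) v = permAct σ (permAct τ v) := rfl

lemma permAct_one (v : Fin m → ZMod 2) : permAct 1 v = v := rfl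

lemma permAct_add (σ : Equiv.Perm (Fin m)) (v w : Fin m → ZMod 2) :
    permAct σ (v + w) = permAct σ v + permAct σ w := rfl

lemma permAct_zero (σ : Equiv.Perm (Fin m)) : permAct σ (0 : Fin m → ZMod 2) = 0 := rfl

lemma permAct_inv_cancel (σ : Equiv.Perm (Fin m)) (v : Fin m → ZMod 2) :
    permAct σ (permAct σ⁻¹ v) = v := by
  rw [← permAct_mul, mul_inv_cancel, permAct_one]

lemma permAct_inv_cancel' (σ : Equiv.Perm (Fin m)) (v : Fin m → ZMod 2) :
    permAct σ⁻¹ (permAct σ v) = v := by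
  rw [← permAct_mul, inv_mul_cancel, permAct_one]

lemma mem_kerCode_iff {C : Set (Fin m → ZMod 2)} {z : Fin m → ZMod 2} :
    z ∈ kerCode C ↔ z ∈ C ∧ ∀ c ∈ C, c + z ∈ C := by
  constructor
  · rintro ⟨hz, him⟩
    refine ⟨hz, fun c hc => ?_⟩
    rw [← him]
    exact ⟨c, hc, rfl⟩
  · rintro ⟨hz, ht⟩
    refine ⟨hz, Set.Subset.antisymm ?_ ?_⟩
    · rintro w ⟨c, hc, rfl⟩
      exact ht c hc
    · intro c hc
      exact ⟨c + z, ht c hc, by show c + z + z = c; rw [add_assoc, vadd_self, add_zero]⟩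

/-- left multiplication is surjective on a (finite) code. -/
lemma pmul_surj {C : Set (Fin m → ZMod 2)} (π : (Fin m → ZMod 2) → Equiv.Perm (Fin m))
    (hclosed : ∀ x ∈ C, ∀ y ∈ C, pmul π x y ∈ C)
    {x : Fin m → ZMod 2} (hx : x ∈ C) :
    ∀ c ∈ C, ∃ d ∈ C, pmul π x d = c := by
  have hfin : C.Finite := Set.toFinite C
  have hmaps : Set.MapsTo (pmul π x) C C := fun y hy => hclosed x hx y hy
  have hinj : Set.InjOn (pmul π x) C := by
    intro a ha b hb hab
    have : permAct (π x) a = permAct (π x) b := by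
      have h1 := congrArg (fun v => x + v) hab
      simpa [pmul, ← add_assoc, vadd_self] using hab
    have := congrArg (permAct (π x)⁻¹) this
    rwa [permAct_inv_cancel', permAct_inv_cancel'] at this
  have hsurj : Set.SurjOn (pmul π x) C C :=
    ((Set.Finite.injOn_iff_bijOn_of_mapsTo hfin hmaps).mp hinj).surjOn
  intro c hc
  obtain ⟨d, hd, hdc⟩ := hsurj hc
  exact ⟨d, hd, hdc⟩

/-- the key lemma: permutations of code elements preserve the kernel. -/
lemma permAct_mem_kerCode {C : Set (Fin m → ZMod 2)} (π : (Fin m → ZMod 2) → Equiv.Perm (Fin m))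
    (hclosed : ∀ x ∈ C, ∀ y ∈ C, pmul π x y ∈ C)
    (h0 : (0 : Fin m → ZMod 2) ∈ C)
    {x z : Fin m → ZMod 2} (hx : x ∈ C) (hz : z ∈ kerCode C) :
    permAct (π x) z ∈ kerCode C := by
  obtain ⟨hzC, hzt⟩ := mem_kerCode_iff.mp hz
  have ht : ∀ c ∈ C, c + permAct (π x) z ∈ C := by
    intro c hc
    obtain ⟨d, hd, rfl⟩ := pmul_surj π hclosed hx c hc
    have : pmul π x d + permAct (π x) z = pmul π x (d + z) := by
      simp [pmul, permAct_add, add_assoc]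
    rw [this]
    exact hclosed x hx (d + z) (hzt d hd)
  have hmem : permAct (π x) z ∈ C := by
    have := ht 0 h0
    simpa using this
  exact mem_kerCode_iff.mpr ⟨hmem, ht⟩

end aux

/-- In a propelinear code `(C, ·)` containing the all-ones vector `u` with `π_u = id`,
the kernel `K(C) ∩ C` is a subgroup of `(C, ·)` (contains the identity, closed under
the operation and under inverses), and for any `c ∈ C` the coset `c · (K(C) ∩ C)`
equals the translate `c + (K(C) ∩ C)`. -/

theorem stmt_12 {m : ℕ} (C : Set (Fin m → ZMod 2)) (h0 : (0 : Fin m → ZMod 2) ∈ C)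
    (π : (Fin m → ZMod 2) → Equiv.Perm (Fin m))
    (hclosed : ∀ x ∈ C, ∀ y ∈ C, pmul π x y ∈ C)
    (hhom : ∀ x ∈ C, ∀ y ∈ C, π (pmul π x y) = π x * π y)
    (hu : allOnes m ∈ C) (hπu : π (allOnes m) = 1) :
    (0 : Fin m → ZMod 2) ∈ kerCode C ∧
    (∀ x ∈ kerCode C, ∀ y ∈ kerCode C, pmul π x y ∈ kerCode C) ∧
    (∀ x ∈ kerCode C, permAct (π x)⁻¹ x ∈ kerCode C) ∧
    (∀ c ∈ C, (pmul π c) '' kerCode C = (fun z => c + z) '' kerCode C) := by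

  -- π 0 = 1
  have hπ0 : π 0 = 1 := by
    have h := hhom 0 h0 0 h0
    have hp : pmul π 0 0 = 0 := by simp [pmul, permAct_zero]
    rw [hp] at h
    exact (mul_left_cancel (a := π 0) (by rw [← h, mul_one])).symm
  -- inverses
  have hinv : ∀ x ∈ C, ∃ y ∈ C, pmul π x y = 0 ∧ π y = (π x)⁻¹ ∧ y = permAct (π x)⁻¹ x := by
    intro x hx
    obtain ⟨y, hy, hxy⟩ := pmul_surj π hclosed hx 0 h0
    have hπy : π y = (π x)⁻¹ := by
      have h := hhom x hx y hy
      rw [hxy, hπ0] at h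
      exact eq_inv_of_mul_eq_one_right h.symm
    have hyx : y = permAct (π x)⁻¹ x := by
      have h1 : permAct (π x) y = x := by
        have h2 := congrArg (fun v => x + v) hxy
        simpa [pmul, ← add_assoc, vadd_self] using h2
      have h3 := congrArg (permAct (π x)⁻¹) h1
      rwa [permAct_inv_cancel'] at h3
    exact ⟨y, hy, hxy, hπy, hyx⟩
  refine ⟨?_, ?_, ?_, ?_⟩
  · exact mem_kerCode_iff.mpr ⟨h0, fun c hc => by simpa using hc⟩
  · intro x hx y hy
    obtain ⟨hxC, hxt⟩ := mem_kerCode_iff.mp hx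
    have hπy : permAct (π x) y ∈ kerCode C := permAct_mem_kerCode π hclosed h0 hxC hy
    obtain ⟨hπyC, hπyt⟩ := mem_kerCode_iff.mp hπy
    refine mem_kerCode_iff.mpr ⟨hclosed x hxC y (mem_kerCode_iff.mp hy).1, fun c hc => ?_⟩
    have : c + pmul π x y = (c + x) + permAct (π x) y := by
      simp [pmul, add_assoc]
    rw [this]
    exact hπyt _ (hxt c hc)
  · intro x hx
    have hxC := (mem_kerCode_iff.mp hx).1
    obtain ⟨y, hy, hxy, hπy, hyx⟩ := hinv x hxC
    have h := permAct_mem_kerCode π hclosed h0 hy hx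
    rwa [hπy] at h
  · intro c hc
    ext w
    constructor
    · rintro ⟨z, hz, rfl⟩
      exact ⟨permAct (π c) z, permAct_mem_kerCode π hclosed h0 hc hz, rfl⟩
    · rintro ⟨z, hz, rfl⟩
      obtain ⟨y, hy, hcy, hπy, _⟩ := hinv c hc
      refine ⟨permAct (π c)⁻¹ z, ?_, ?_⟩
      · have := permAct_mem_kerCode π hclosed h0 hy hz
        rwa [hπy] at this
      · show pmul π c _ = c + z
        rw [pmul, permAct_inv_cancel]
end

section
/- Let C be an Hadamard code of length 2^s·n' with n' odd whose kernel has dimension k. Then the rank r of C satisfies r ≤ 2^{s+1}·n'/2^k + k − 1. -/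
/-!
The kernel `K` of `C` acts on `C` by translation, so `C` is a union of `|C| / 2^k` cosets of `K`,
one of which is `K` itself because `0 ∈ C`. Hence `span C` is spanned by `K` together with one
representative of each of the other cosets, giving `r ≤ k + (|C| / 2^k - 1)`.
-/

open Finset Module

namespace Submodule

theorem finrank_span_add_one_le_finrank_add_card_image_mkQ {F V : Type*} [Field F]
    [AddCommGroup V] [Module F V] (K : Submodule F V) [FiniteDimensional F K]
    [DecidableEq (V ⧸ K)] {C : Finset V} (h0 : 0 ∈ C) :
    finrank F (span F (C : Set V)) + 1 ≤ finrank F K + #(C.image K.mkQ) := by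
  classical
  set rep := Function.surjInv K.mkQ_surjective
  have hrep (q : V ⧸ K) : K.mkQ (rep q) = q := Function.surjInv_eq K.mkQ_surjective q
  set T := ((C.image K.mkQ).erase 0).image rep
  have hspan : span F (C : Set V) ≤ K ⊔ span F (T : Set V) := by
    refine span_le.2 fun c hc => ?_
    have hsub : c - rep (K.mkQ c) ∈ K := by
      rw [← Quotient.mk_eq_zero, ← mkQ_apply, map_sub, hrep, sub_self]
    rw [← sub_add_cancel c (rep (K.mkQ c))]
    refine add_mem (mem_sup_left hsub) ?_
    by_cases hc0 : K.mkQ c = 0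
    · exact mem_sup_left ((Quotient.mk_eq_zero K).1 (by rw [← mkQ_apply, hrep, hc0]))
    · exact mem_sup_right (subset_span (mem_image_of_mem _
        (mem_erase.2 ⟨hc0, mem_image_of_mem _ hc⟩)))
  have hT : #T + 1 ≤ #(C.image K.mkQ) := by
    rw [← card_erase_add_one (mem_image.2 ⟨0, h0, map_zero _⟩)]
    exact Nat.add_le_add_right card_image_le 1
  have hsup := finrank_add_le_finrank_add_finrank K (span F (T : Set V))
  have hmono := finrank_mono hspan
  have hspanT : finrank F (span F (T : Set V)) ≤ #T := finrank_span_finset_le_card T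
  omega

theorem card_eq_card_image_mkQ_mul_natCard {R V : Type*} [Ring R] [AddCommGroup V] [Module R V]
    (K : Submodule R V) [DecidableEq (V ⧸ K)] {C : Finset V}
    (hC : ∀ c ∈ C, ∀ z ∈ K, c + z ∈ C) :
    #C = #(C.image K.mkQ) * Nat.card K := by
  classical
  refine (card_eq_sum_card_image K.mkQ C).trans (sum_const_nat fun q hq => ?_)
  obtain ⟨c, hc, rfl⟩ := mem_image.1 hq
  rw [← Nat.card_eq_finsetCard]
  exact Nat.card_congr
    { toFun := fun x => ⟨x.1 - c, (Quotient.eq K).1 (mem_filter.1 x.2).2⟩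
      invFun := fun z => ⟨c + z, mem_filter.2 ⟨hC c hc z z.2, (Quotient.eq K).2 (by simp)⟩⟩
      left_inv := fun x => Subtype.ext (by simp)
      right_inv := fun z => by simp }

end Submodule

section TranslationKernel

open Pointwise

variable {V : Type*} [AddCommGroup V] [Module (ZMod 2) V]

/-- The kernel `K(C) = {z | C + z = C}`, the stabilizer of `C` under translation, which is
a subspace since every additive subgroup of an `𝔽₂`-module is. -/
def translationKernel (C : Set V) : Submodule (ZMod 2) V :=
  AddSubgroup.toZModSubmodule 2 (AddAction.stabilizer V C)

theorem mem_translationKernel {C : Set V} {z : V} :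
    z ∈ translationKernel C ↔ (· + z) '' C = C := by
  simp only [translationKernel, AddSubgroup.mem_toZModSubmodule, AddAction.mem_stabilizer_iff,
    ← Set.image_vadd, vadd_eq_add, add_comm z]

theorem add_mem_of_mem_translationKernel {C : Set V} {c z : V} (hc : c ∈ C)
    (hz : z ∈ translationKernel C) : c + z ∈ C :=
  mem_translationKernel.1 hz ▸ Set.mem_image_of_mem _ hc

end TranslationKernel

theorem stmt_13_general (s n' : ℕ)
    (C : Finset (Fin (2^s * n') → ZMod 2))
    (h0 : (0 : Fin (2^s * n') → ZMod 2) ∈ C)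
    (hcard : C.card = 2^(s+1) * n')
    (r k : ℕ)
    (hr : r = Module.finrank (ZMod 2)
      (Submodule.span (ZMod 2) (C : Set (Fin (2^s * n') → ZMod 2))))
    (hk : k = Module.finrank (ZMod 2)
      (Submodule.span (ZMod 2)
        {z : Fin (2^s * n') → ZMod 2 |
          (fun v => v + z) '' (C : Set (Fin (2^s * n') → ZMod 2)) = (C : Set _)})) :
    r ≤ 2^(s+1) * n' / 2^k + k - 1 := by
  classical
  set K := translationKernel (C : Set (Fin (2^s * n') → ZMod 2))
  have hK : k = finrank (ZMod 2) K := by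
    have hset : {z | (· + z) '' (C : Set (Fin (2^s * n') → ZMod 2)) = C} = (K : Set _) :=
      Set.ext fun z => mem_translationKernel.symm
    rw [hk, hset, Submodule.span_eq]
  have hKcard : Nat.card K = 2 ^ k := by
    rw [natCard_eq_pow_finrank (K := ZMod 2), Nat.card_zmod, hK]
  have hcosets : 2^(s+1) * n' / 2^k = #(C.image K.mkQ) := by
    rw [← hcard, K.card_eq_card_image_mkQ_mul_natCard fun c hc z hz =>
      add_mem_of_mem_translationKernel (mem_coe.2 hc) hz, hKcard, Nat.mul_div_cancel _ (by positivity)]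
  have hrank := K.finrank_span_add_one_le_finrank_add_card_image_mkQ h0
  omega

/-- Let `C` be an Hadamard code of length `2^s * n'` with `n'` odd, rank `r` and
kernel of dimension `k`. Then `r ≤ 2^(s+1) * n' / 2^k + k - 1`. -/
theorem stmt_13 (s n' : ℕ) (hs : 2 ≤ s) (hodd : Odd n')
    (C : Finset (Fin (2^s * n') → ZMod 2))
    (h0 : (0 : Fin (2^s * n') → ZMod 2) ∈ C) (hu : allOnes (2^s * n') ∈ C)
    (hcard : C.card = 2^(s+1) * n')
    (hdist : ∀ x ∈ C, ∀ y ∈ C, x ≠ y → x ≠ y + allOnes (2^s * n') →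
      hammingDist x y = 2^(s-1) * n')
    (r k : ℕ)
    (hr : r = Module.finrank (ZMod 2)
      (Submodule.span (ZMod 2) (C : Set (Fin (2^s * n') → ZMod 2))))
    (hk : k = Module.finrank (ZMod 2)
      (Submodule.span (ZMod 2)
        {z : Fin (2^s * n') → ZMod 2 |
          (fun v => v + z) '' (C : Set (Fin (2^s * n') → ZMod 2)) = (C : Set _)})) :
    r ≤ 2^(s+1) * n' / 2^k + k - 1 :=
  stmt_13_general s n' C h0 hcard r k hr hk
end
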